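/- Let D be the canonical d-connection on ℝⁿ × ℝⁿ determined by a smooth invertible symmetric metric g_{ij}(x,y) and smooth N-connection coefficients Nᵃᵢ(x,y), and let T(X,Y) = D_X Y − D_Y X − [X,Y] be its torsion. Then the torsion components in the N-adapted frame are: T(𝐞ⱼ, 𝐞ᵢ) = Ωᵃ_{ij} e_a (so the h–h torsion T̂ⁱ_{jk} vanishes and T̂ᵃ_{ij} = Ωᵃ_{ij}); T(e_b, 𝐞ᵢ) = Ĉʲ_{ib} 𝐞ⱼ + ( ∂Nᵃᵢ/∂yᵇ − L̂ᵃ_{bi} ) e_a (so T̂ⁱ_{jc} = Ĉⁱ_{jc} and T̂ᵃ_{ib} = ∂Nᵃᵢ/∂yᵇ − L̂ᵃ_{bi}); and T(e_b, e_c) = 0. -/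

import Mathlib

open scoped BigOperators

noncomputable section

/-- The space `ℝⁿ × ℝⁿ` with coordinates `(xⁱ, yᵃ)`. -/
abbrev E (n : ℕ) := (Fin n → ℝ) × (Fin n → ℝ)

/-- Vector fields on `ℝⁿ × ℝⁿ`. -/
abbrev VF (n : ℕ) := E n → E n

/-- Lie bracket of vector fields, `[V,W](u) = DW(u)(V(u)) − DV(u)(W(u))`. -/
def bracket {n : ℕ} (V W : VF n) (u : E n) : E n :=
  fderiv ℝ W u (V u) - fderiv ℝ V u (W u)

/-- Horizontal N-adapted frame field `𝐞ᵢ = ∂/∂xⁱ − Nᵃᵢ ∂/∂yᵃ`. -/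
def eH {n : ℕ} (N : E n → Fin n → Fin n → ℝ) (i : Fin n) : VF n :=
  fun u => (Pi.single i 1, fun a => -(N u a i))

/-- Vertical frame field `e_a = ∂/∂yᵃ`. -/
def eV {n : ℕ} (a : Fin n) : VF n :=
  fun _ => (0, Pi.single a 1)

/-- `∂Nᵃᵢ/∂xʲ`. -/
def Nx {n : ℕ} (N : E n → Fin n → Fin n → ℝ) (a i j : Fin n) (u : E n) : ℝ :=
  fderiv ℝ (fun x => N (x, u.2) a i) u.1 (Pi.single j 1)

/-- `∂Nᵃᵢ/∂yᵇ`. -/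
def Ny {n : ℕ} (N : E n → Fin n → Fin n → ℝ) (a i b : Fin n) (u : E n) : ℝ :=
  fderiv ℝ (fun y => N (u.1, y) a i) u.2 (Pi.single b 1)

/-- The Neijenhuis (curvature) tensor of the N-connection. -/
def Omega {n : ℕ} (N : E n → Fin n → Fin n → ℝ) (a i j : Fin n) (u : E n) : ℝ :=
  Nx N a i j u - Nx N a j i u +
    ∑ b, (N u b i * Ny N a j b u - N u b j * Ny N a i b u)

/-- Derivative of a scalar function along the horizontal frame field `𝐞_k`. -/
def eHd {n : ℕ} (N : E n → Fin n → Fin n → ℝ) (k : Fin n) (f : E n → ℝ) (u : E n) : ℝ :=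
  fderiv ℝ f u (Pi.single k 1, fun a => -(N u a k))

/-- Vertical partial derivative `∂f/∂yᵇ`. -/
def vd {n : ℕ} (b : Fin n) (f : E n → ℝ) (u : E n) : ℝ :=
  fderiv ℝ f u (0, Pi.single b 1)

/-- Canonical h-connection coefficients `L̂ⁱ_{jk}`. -/
def Lhat {n : ℕ} (g : E n → Matrix (Fin n) (Fin n) ℝ) (N : E n → Fin n → Fin n → ℝ)
    (i j k : Fin n) (u : E n) : ℝ :=
  (1 / 2) * ∑ h, (g u)⁻¹ i h *
    (eHd N k (fun v => g v j h) u + eHd N j (fun v => g v k h) u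
      - eHd N h (fun v => g v j k) u)

/-- Canonical v-connection coefficients `Ĉᵃ_{bc}` (for the v-metric `g`, with
h- and v-indices identified). -/
def Chat {n : ℕ} (g : E n → Matrix (Fin n) (Fin n) ℝ) (a b c : Fin n) (u : E n) : ℝ :=
  (1 / 2) * ∑ e, (g u)⁻¹ a e *
    (vd b (fun v => g v e c) u + vd c (fun v => g v e b) u - vd e (fun v => g v b c) u)

/-- Horizontal N-adapted components `a_V = V.1` of a vector field. -/
def acomp {n : ℕ} (V : VF n) (u : E n) (i : Fin n) : ℝ := (V u).1 i

/-- Vertical N-adapted components `b_Vᵃ = V.2ᵃ + Nᵃ_k V.1ᵏ` of a vector field. -/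
def bcomp {n : ℕ} (N : E n → Fin n → Fin n → ℝ) (V : VF n) (u : E n) (a : Fin n) : ℝ :=
  (V u).2 a + ∑ k, N u a k * (V u).1 k

/-- The d-connection with N-adapted coefficients `Lc` (h-part) and `Cc` (v-part),
identified in the h- and v-sectors:
`D_{𝐞_k}𝐞ⱼ = Lⁱ_{jk} 𝐞ᵢ`, `D_{𝐞_k}eⱼ = Lⁱ_{jk} eᵢ`, `D_{e_c}𝐞ⱼ = Cⁱ_{jc} 𝐞ᵢ`,
`D_{e_c}eⱼ = Cⁱ_{jc} eᵢ`, extended function-linearly in `X` and by the Leibniz rule in `Y`. -/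
def Dconn {n : ℕ} (Lc Cc : Fin n → Fin n → Fin n → E n → ℝ)
    (N : E n → Fin n → Fin n → ℝ) (X Y : VF n) (u : E n) : E n :=
  let hc : Fin n → ℝ := fun i =>
    fderiv ℝ (fun v => acomp Y v i) u (X u)
      + (∑ j, ∑ k, Lc i j k u * acomp Y u j * acomp X u k)
      + ∑ j, ∑ c, Cc i j c u * acomp Y u j * bcomp N X u c
  let vc : Fin n → ℝ := fun a =>
    fderiv ℝ (fun v => bcomp N Y v a) u (X u)
      + (∑ b, ∑ k, Lc a b k u * bcomp N Y u b * acomp X u k)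
      + ∑ b, ∑ c, Cc a b c u * bcomp N Y u b * bcomp N X u c
  (hc, fun a => vc a - ∑ i, N u a i * hc i)

/-- Torsion `T(X,Y) = D_X Y − D_Y X − [X,Y]` of a d-connection. -/
def Tors {n : ℕ} (Lc Cc : Fin n → Fin n → Fin n → E n → ℝ)
    (N : E n → Fin n → Fin n → ℝ) (X Y : VF n) (u : E n) : E n :=
  Dconn Lc Cc N X Y u - Dconn Lc Cc N Y X u - bracket X Y u


section Helpers
variable {n : ℕ}

lemma clm_apply_sum (L : (Fin n → ℝ) →L[ℝ] ℝ) (w : Fin n → ℝ) :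
    L w = ∑ j, w j * L (Pi.single j 1) := by
  have hw : w = ∑ j, w j • (Pi.single j 1 : Fin n → ℝ) := by
    funext k
    simp [Finset.sum_apply, Pi.single_apply, mul_ite, Finset.sum_ite_eq]
  calc L w = L (∑ j, w j • (Pi.single j 1 : Fin n → ℝ)) := by rw [← hw]
  _ = ∑ j, w j * L (Pi.single j 1) := by
    rw [map_sum]; simp [smul_eq_mul]

lemma fderiv_split {f : E n → ℝ} (hf : Differentiable ℝ f) (u v : E n) :
    fderiv ℝ f u v =
      fderiv ℝ (fun x => f (x, u.2)) u.1 v.1 + fderiv ℝ (fun y => f (u.1, y)) u.2 v.2 := by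
  have hfu : HasFDerivAt f (fderiv ℝ f u) u := (hf u).hasFDerivAt
  have h1 : HasFDerivAt (fun x : Fin n → ℝ => (x, u.2))
      (ContinuousLinearMap.inl ℝ (Fin n → ℝ) (Fin n → ℝ)) u.1 :=
    (hasFDerivAt_id u.1).prodMk (hasFDerivAt_const u.2 u.1)
  have h2 : HasFDerivAt (fun y : Fin n → ℝ => ((u.1 : Fin n → ℝ), y))
      (ContinuousLinearMap.inr ℝ (Fin n → ℝ) (Fin n → ℝ)) u.2 :=
    (hasFDerivAt_const u.1 u.2).prodMk (hasFDerivAt_id u.2)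
  have e1 := (hfu.comp u.1 h1).fderiv
  have e2 := (hfu.comp u.2 h2).fderiv
  simp only [Function.comp_def] at e1 e2
  rw [e1, e2]
  simp only [ContinuousLinearMap.comp_apply, ContinuousLinearMap.inl_apply,
    ContinuousLinearMap.inr_apply]
  rw [← map_add]
  congr 1
  ext <;> simp

variable {N : E n → Fin n → Fin n → ℝ}

lemma fderiv_N_apply (hN : ∀ a i, ContDiff ℝ (⊤ : ℕ∞) fun u => N u a i) (a i : Fin n) (u v : E n) :
    fderiv ℝ (fun w => N w a i) u v =
      (∑ j, v.1 j * Nx N a i j u) + ∑ b, v.2 b * Ny N a i b u := by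
  rw [fderiv_split ((hN a i).differentiable (by simp)) u v,
    clm_apply_sum (fderiv ℝ (fun x => N (x, u.2) a i) u.1) v.1,
    clm_apply_sum (fderiv ℝ (fun y => N (u.1, y) a i) u.2) v.2]
  rfl

lemma fderiv_eH (hN : ∀ a i, ContDiff ℝ (⊤ : ℕ∞) fun u => N u a i) (i : Fin n) (u v : E n) :
    fderiv ℝ (eH N i) u v = (0, fun a => -(fderiv ℝ (fun w => N w a i) u v)) := by
  have h2 : ∀ a, HasFDerivAt (fun u : E n => -(N u a i))
      (-(fderiv ℝ (fun w => N w a i) u)) u :=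
    fun a => ((((hN a i).differentiable (by simp)) u).hasFDerivAt).neg
  have h3 : HasFDerivAt (fun u : E n => fun a => -(N u a i))
      (ContinuousLinearMap.pi fun a => -(fderiv ℝ (fun w => N w a i) u)) u :=
    hasFDerivAt_pi.mpr h2
  have h := ((hasFDerivAt_const (Pi.single i 1 : Fin n → ℝ) u).prodMk h3).fderiv
  have he : eH N i = fun u : E n => ((Pi.single i 1 : Fin n → ℝ), fun a => -(N u a i)) := rfl
  rw [he, h]
  rfl

@[simp] lemma bcomp_eH (i : Fin n) (v : E n) (a : Fin n) : bcomp N (eH N i) v a = 0 := by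
  simp [bcomp, eH, Pi.single_apply, mul_ite, Finset.sum_ite_eq']

@[simp] lemma bcomp_eV (b : Fin n) (v : E n) (a : Fin n) :
    bcomp N (eV b) v a = (Pi.single b 1 : Fin n → ℝ) a := by
  simp [bcomp, eV]

lemma Dconn_eH_eH (Lc Cc : Fin n → Fin n → Fin n → E n → ℝ) (i j : Fin n) (u : E n) :
    Dconn Lc Cc N (eH N j) (eH N i) u =
      ((fun k => Lc k i j u), fun a => -(∑ k, N u a k * Lc k i j u)) := by
  have ha : ∀ k : Fin n, (fun v => acomp (eH N i) v k) = fun _ : E n => (Pi.single i 1 : Fin n → ℝ) k :=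
    fun k => rfl
  have hb : ∀ a : Fin n, (fun v => bcomp N (eH N i) v a) = fun _ : E n => (0:ℝ) := by
    intro a; funext v; exact bcomp_eH i v a
  simp only [Dconn, ha, hb, fderiv_fun_const, ContinuousLinearMap.zero_apply, Pi.zero_apply,
    acomp, eH, bcomp_eH, Pi.single_apply, mul_ite, ite_mul, mul_one, one_mul, mul_zero,
    zero_mul, Finset.sum_ite_eq', Finset.mem_univ, if_true, add_zero, zero_add,
    Finset.sum_const_zero, zero_sub]

lemma Dconn_eV_eH (Lc Cc : Fin n → Fin n → Fin n → E n → ℝ) (i b : Fin n) (u : E n) :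
    Dconn Lc Cc N (eV b) (eH N i) u =
      ((fun k => Cc k i b u), fun a => -(∑ k, N u a k * Cc k i b u)) := by
  have ha : ∀ k : Fin n, (fun v => acomp (eH N i) v k) = fun _ : E n => (Pi.single i 1 : Fin n → ℝ) k :=
    fun k => rfl
  have hb : ∀ a : Fin n, (fun v => bcomp N (eH N i) v a) = fun _ : E n => (0:ℝ) := by
    intro a; funext v; exact bcomp_eH i v a
  simp only [Dconn, ha, hb, fderiv_fun_const, ContinuousLinearMap.zero_apply, Pi.zero_apply,
    acomp, eH, eV, bcomp_eH, bcomp_eV, Pi.single_apply, mul_ite, ite_mul, mul_one, one_mul,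
    mul_zero, zero_mul, Finset.sum_ite_eq', Finset.mem_univ, if_true, add_zero, zero_add,
    Finset.sum_const_zero, zero_sub]

lemma Dconn_eH_eV (Lc Cc : Fin n → Fin n → Fin n → E n → ℝ) (i b : Fin n) (u : E n) :
    Dconn Lc Cc N (eH N i) (eV b) u = (0, fun a => Lc a b i u) := by
  have ha : ∀ k : Fin n, (fun v => acomp (eV b) v k) = fun _ : E n => (0:ℝ) :=
    fun k => rfl
  have hb : ∀ a : Fin n, (fun v => bcomp N (eV b) v a) = fun _ : E n => (Pi.single b 1 : Fin n → ℝ) a := by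
    intro a; funext v; exact bcomp_eV b v a
  simp only [Dconn, ha, hb, fderiv_fun_const, ContinuousLinearMap.zero_apply, Pi.zero_apply,
    acomp, eH, eV, bcomp_eH, bcomp_eV, Pi.single_apply, mul_ite, ite_mul, mul_one, one_mul,
    mul_zero, zero_mul, Finset.sum_ite_eq', Finset.mem_univ, if_true, add_zero, zero_add,
    Finset.sum_const_zero, sub_zero]
  rfl

lemma Dconn_eV_eV (Lc Cc : Fin n → Fin n → Fin n → E n → ℝ) (b c : Fin n) (u : E n) :
    Dconn Lc Cc N (eV b) (eV c) u = (0, fun a => Cc a c b u) := by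
  have ha : ∀ k : Fin n, (fun v => acomp (eV c) v k) = fun _ : E n => (0:ℝ) :=
    fun k => rfl
  have hb : ∀ a : Fin n, (fun v => bcomp N (eV c) v a) = fun _ : E n => (Pi.single c 1 : Fin n → ℝ) a := by
    intro a; funext v; exact bcomp_eV c v a
  simp only [Dconn, ha, hb, fderiv_fun_const, ContinuousLinearMap.zero_apply, Pi.zero_apply,
    acomp, eV, bcomp_eV, Pi.single_apply, mul_ite, ite_mul, mul_one, one_mul,
    mul_zero, zero_mul, Finset.sum_ite_eq', Finset.mem_univ, if_true, add_zero, zero_add,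
    Finset.sum_const_zero, sub_zero]
  rfl

end Helpers


section Helpers2
variable {n : ℕ} {N : E n → Fin n → Fin n → ℝ}

lemma fderiv_eV_eq (b : Fin n) (u : E n) : fderiv ℝ (eV (n:=n) b) u = 0 := by
  have : eV (n:=n) b = fun _ : E n => ((0 : Fin n → ℝ), (Pi.single b 1 : Fin n → ℝ)) := rfl
  rw [this, fderiv_fun_const]
  rfl

lemma bracket_eH_eH (hN : ∀ a i, ContDiff ℝ (⊤ : ℕ∞) fun u => N u a i) (i j : Fin n) (u : E n) :
    bracket (eH N j) (eH N i) u = (0, fun a => -(Omega N a i j u)) := by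
  rw [bracket, fderiv_eH hN i u (eH N j u), fderiv_eH hN j u (eH N i u)]
  rw [Prod.mk_sub_mk]
  refine Prod.ext ?_ ?_
  · simp
  · funext a
    simp only [Pi.sub_apply]
    rw [fderiv_N_apply hN a i u (eH N j u), fderiv_N_apply hN a j u (eH N i u)]
    simp only [eH, Pi.single_apply, ite_mul, one_mul, zero_mul, Finset.sum_ite_eq',
      Finset.mem_univ, if_true, Omega, neg_mul, Finset.sum_neg_distrib,
      Finset.sum_sub_distrib]
    ring

lemma bracket_eV_eH (hN : ∀ a i, ContDiff ℝ (⊤ : ℕ∞) fun u => N u a i) (i b : Fin n) (u : E n) :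
    bracket (eV b) (eH N i) u = (0, fun a => -(Ny N a i b u)) := by
  rw [bracket, fderiv_eH hN i u (eV b u), fderiv_eV_eq b u]
  simp only [ContinuousLinearMap.zero_apply, sub_zero]
  refine Prod.ext ?_ ?_
  · simp
  · funext a
    dsimp only
    rw [fderiv_N_apply hN a i u (eV b u)]
    simp [eV, Pi.single_apply, ite_mul, Finset.sum_ite_eq']

lemma bracket_eV_eV (b c : Fin n) (u : E n) :
    bracket (eV (n:=n) b) (eV c) u = 0 := by
  rw [bracket, fderiv_eV_eq, fderiv_eV_eq]
  simp

lemma Lhat_symm (g : E n → Matrix (Fin n) (Fin n) ℝ) (hsym : ∀ u, (g u).IsSymm)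
    (i j k : Fin n) (u : E n) : Lhat g N i j k u = Lhat g N i k j u := by
  unfold Lhat
  congr 1
  apply Finset.sum_congr rfl
  intro h _
  have e1 : (fun v => g v j k) = fun v => g v k j := funext fun v => ((hsym v).apply j k).symm
  rw [e1]
  ring

lemma Chat_symm (g : E n → Matrix (Fin n) (Fin n) ℝ) (hsym : ∀ u, (g u).IsSymm)
    (a b c : Fin n) (u : E n) : Chat g a b c u = Chat g a c b u := by
  unfold Chat
  congr 1
  apply Finset.sum_congr rfl
  intro e _
  have e1 : (fun v => g v b c) = fun v => g v c b := funext fun v => ((hsym v).apply b c).symm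
  rw [e1]
  ring

lemma sum_smul_eV (c : Fin n → ℝ) (u : E n) :
    ∑ a, c a • eV (n:=n) a u = ((0 : Fin n → ℝ), c) := by
  refine Prod.ext ?_ ?_
  · rw [Prod.fst_sum]; simp [eV]
  · rw [Prod.snd_sum]
    have h : ∀ a : Fin n, (c a • eV (n:=n) a u).2 = Pi.single a (c a) := by
      intro a
      funext k
      simp only [eV, Prod.smul_snd, Pi.smul_apply, Pi.single_apply, smul_eq_mul]
      split <;> simp
    rw [Finset.sum_congr rfl fun a _ => h a, Finset.univ_sum_single]

lemma sum_smul_eH (c : Fin n → ℝ) (u : E n) :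
    ∑ j, c j • eH N j u = (c, fun a => -(∑ j, N u a j * c j)) := by
  refine Prod.ext ?_ ?_
  · rw [Prod.fst_sum]
    have h : ∀ j : Fin n, (c j • eH N j u).1 = Pi.single j (c j) := by
      intro j
      funext k
      simp only [eH, Prod.smul_fst, Pi.smul_apply, Pi.single_apply, smul_eq_mul]
      split <;> simp
    rw [Finset.sum_congr rfl fun j _ => h j, Finset.univ_sum_single]
  · rw [Prod.snd_sum]
    funext a
    simp only [Finset.sum_apply, eH, Prod.smul_snd, Pi.smul_apply, smul_eq_mul,
      Finset.sum_neg_distrib]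
    rw [← Finset.sum_neg_distrib]
    apply Finset.sum_congr rfl
    intro j _
    ring

end Helpers2

/-- Torsion components of the canonical d-connection in the N-adapted frame:
`T(𝐞ⱼ, 𝐞ᵢ) = Ωᵃ_{ij} e_a`, `T(e_b, 𝐞ᵢ) = Ĉʲ_{ib} 𝐞ⱼ + (∂Nᵃᵢ/∂yᵇ − L̂ᵃ_{bi}) e_a`,
and `T(e_b, e_c) = 0`. -/
theorem canonical_dConnection_torsion {n : ℕ}
    (g : E n → Matrix (Fin n) (Fin n) ℝ) (N : E n → Fin n → Fin n → ℝ)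
    (hg : ∀ i j, ContDiff ℝ (⊤ : ℕ∞) (fun u => g u i j))
    (hN : ∀ a i, ContDiff ℝ (⊤ : ℕ∞) (fun u => N u a i))
    (hsym : ∀ u, (g u).IsSymm)
    (hinv : ∀ u, IsUnit (g u).det) :
    (∀ (u : E n) (i j : Fin n),
      Tors (Lhat g N) (Chat g) N (eH N j) (eH N i) u = ∑ a, Omega N a i j u • eV a u) ∧
    (∀ (u : E n) (i b : Fin n),
      Tors (Lhat g N) (Chat g) N (eV b) (eH N i) u =
        (∑ j, Chat g j i b u • eH N j u)
          + ∑ a, (Ny N a i b u - Lhat g N a b i u) • eV a u) ∧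
    (∀ (u : E n) (b c : Fin n),
      Tors (Lhat g N) (Chat g) N (eV b) (eV c) u = 0) := by
  refine ⟨?_, ?_, ?_⟩
  · intro u i j
    rw [Tors, Dconn_eH_eH, Dconn_eH_eH, bracket_eH_eH hN i j u, sum_smul_eV]
    rw [Prod.mk_sub_mk, Prod.mk_sub_mk]
    refine Prod.ext ?_ ?_
    · dsimp only
      funext k
      simp only [Pi.sub_apply, Pi.zero_apply]
      rw [Lhat_symm g hsym k i j u]
      ring
    · dsimp only
      funext a
      simp only [Pi.sub_apply]
      have hs : ∑ k, N u a k * Lhat g N k i j u = ∑ k, N u a k * Lhat g N k j i u :=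
        Finset.sum_congr rfl fun k _ => by rw [Lhat_symm g hsym k i j u]
      rw [hs]
      ring
  · intro u i b
    rw [Tors, Dconn_eV_eH, Dconn_eH_eV, bracket_eV_eH hN i b u, sum_smul_eH, sum_smul_eV]
    rw [Prod.mk_sub_mk, Prod.mk_sub_mk, Prod.mk_add_mk]
    refine Prod.ext ?_ ?_
    · dsimp only
      funext k
      simp
    · dsimp only
      funext a
      simp only [Pi.sub_apply, Pi.add_apply]
      ring
  · intro u b c
    rw [Tors, Dconn_eV_eV, Dconn_eV_eV, bracket_eV_eV]
    refine Prod.ext (by simp) ?_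
    funext a
    simp [Chat_symm g hsym a b c u]
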